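/- arXiv:2412.20936 — 2 statements merged into one kernel-verified Lean document; each statement's English description precedes it below -/
import Mathlib

section
/- There exists a temporal-network spread function that is not monotone: concretely, there is a finite set V, a set function σ : Finset V → ℕ arising as the number of ever-activated nodes of a deterministic diffusion with active-inactive (irreversible deactivation) transitions, and seed sets S ⊂ S' with σ(S') < σ(S). -/
open Finset

variable {V : Type} [Fintype V] [DecidableEq V]

/-- One step of deterministic diffusion with active–inactive transitions on a
snapshot with edge set `E`: susceptible nodes with an active in-neighbour become
active (probability-1 activation along present edges), and currently active
nodes irreversibly deactivate. -/
def diffStep (E : Finset (V × V)) (A D : Finset V) : Finset V × Finset V :=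
  (Finset.univ.filter (fun v => v ∉ A ∧ v ∉ D ∧ ∃ u ∈ A, (u, v) ∈ E), D ∪ A)

/-- Run the deterministic diffusion over a finite sequence of snapshots,
returning the final (active, deactivated) pair. -/
def diffRun : List (Finset (V × V)) → Finset V → Finset V → Finset V × Finset V
  | [], A, D => (A, D)
  | E :: Es, A, D => diffRun Es (diffStep E A D).1 (diffStep E A D).2

/-- The spread `σ(S)`: the number of nodes that were ever active when the seed
set `S` is active at time 0 (and nothing is deactivated yet). -/
def diffSpread (Es : List (Finset (V × V))) (S : Finset V) : ℕ :=
  ((diffRun Es S ∅).1 ∪ (diffRun Es S ∅).2).card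

/-!
On the path `0 → 1 → 2 → 3` whose edge `(i, i+1)` is present only in snapshot `i+1`, the seed `0`
relays the activation along the whole path. Seeding `1` as well makes it active one step too
early: it deactivates after the first snapshot, before its out-edge appears, and can never be
reactivated, so the cascade stops after two nodes.
-/

def pathSnapshots : List (Finset (Fin 4 × Fin 4)) :=
  [{(0, 1)}, {(1, 2)}, {(2, 3)}]

theorem diffSpread_pathSnapshots_singleton : diffSpread pathSnapshots {0} = 4 := by
  decide

theorem diffSpread_pathSnapshots_pair : diffSpread pathSnapshots {0, 1} = 2 := by
  decide

/-- There exists a temporal network with active–inactive transitions whose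
spread function is **not monotone**: some seed sets `S ⊂ S'` satisfy
`σ(S') < σ(S)`. -/
theorem spread_not_monotone :
    ∃ (V : Type) (_i : Fintype V) (_j : DecidableEq V)
      (Es : List (Finset (V × V))) (S S' : Finset V),
      S ⊂ S' ∧ diffSpread Es S' < diffSpread Es S := by
  refine ⟨Fin 4, inferInstance, inferInstance, pathSnapshots, {0}, {0, 1}, by decide, ?_⟩
  rw [diffSpread_pathSnapshots_pair, diffSpread_pathSnapshots_singleton]
  norm_num
end

section
/- There exists a temporal-network spread function with active-inactive transitions that is not submodular: there are sets A ⊆ B and an element x ∉ B with σ(A ∪ {x}) − σ(A) < σ(B ∪ {x}) − σ(B). -/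
/-!
An early seed can block spread, because activity lasts exactly one snapshot. In the
network `[{0 → 1, 3 → 2}, {1 → 2}]` the seed `0` reaches `2` along `0 → 1 → 2`; seeding `1`
as well makes it active in the first snapshot, where it has no out-edge, and inactive
forever once `1 → 2` appears. So `2` is lost from `{0, 1}`, and the extra seed `3` wins it
back only there: its marginal gain is `1` over `{0}` but `2` over `{0, 1}`.
-/

open Finset

variable {V : Type} [Fintype V] [DecidableEq V]

def earlySeedNetwork : List (Finset (Fin 4 × Fin 4)) :=
  [{(0, 1), (3, 2)}, {(1, 2)}]

lemma diffSpread_earlySeedNetwork_zero : diffSpread earlySeedNetwork {0} = 3 := by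
  decide

lemma diffSpread_earlySeedNetwork_zero_three : diffSpread earlySeedNetwork {3, 0} = 4 := by
  decide

lemma diffSpread_earlySeedNetwork_zero_one : diffSpread earlySeedNetwork {0, 1} = 2 := by
  decide

lemma diffSpread_earlySeedNetwork_zero_one_three :
    diffSpread earlySeedNetwork {3, 0, 1} = 4 := by
  decide

/-- There exists a temporal network with active–inactive transitions whose
spread function is **not submodular**: sets `A ⊆ B` and `x ∉ B` with
`σ(A ∪ {x}) − σ(A) < σ(B ∪ {x}) − σ(B)`. -/
theorem spread_not_submodular :
    ∃ (V : Type) (_i : Fintype V) (_j : DecidableEq V)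
      (Es : List (Finset (V × V))) (A B : Finset V) (x : V),
      A ⊆ B ∧ x ∉ B ∧
      (diffSpread Es (insert x A) : ℤ) - (diffSpread Es A : ℤ) <
        (diffSpread Es (insert x B) : ℤ) - (diffSpread Es B : ℤ) := by
  refine ⟨Fin 4, inferInstance, inferInstance, earlySeedNetwork, {0}, {0, 1}, 3,
    by decide, by decide, ?_⟩
  rw [diffSpread_earlySeedNetwork_zero, diffSpread_earlySeedNetwork_zero_three,
    diffSpread_earlySeedNetwork_zero_one, diffSpread_earlySeedNetwork_zero_one_three]
  norm_num
end
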